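/- arXiv:2304.02398 — 2 statements merged into one kernel-verified Lean document; each statement's English description precedes it below -/
import Mathlib

section
/- (Tightness of the SROCR relaxation at ω = 1) Let V be an M×M complex positive semidefinite matrix and let φ ∈ ℂ^M satisfy ‖φ‖₂ ≤ 1. If φ^H V φ ≥ Tr(V), then V = Tr(V) · φ φ^H; in particular, rank(V) ≤ 1. -/
/-!
Write `P = φ φᴴ`. The compression `(1 - P) V (1 - P)` is positive semidefinite and its trace is
`Tr V - (2 - ‖φ‖²) φᴴVφ`, which the hypotheses `‖φ‖ ≤ 1` and `Tr V ≤ φᴴVφ` force to be `≤ 0`.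
Hence it vanishes, which for `V ⪰ 0` means `V P = V`; by hermiticity also `P V = V`, so
`V = P V P = (φᴴVφ) P`, and the equality case of the trace estimate gives `φᴴVφ = Tr V`.
-/

open Matrix ComplexOrder

namespace Matrix

section vecMulVec

variable {l m n o R : Type*} [Fintype m] [Fintype n] [CommSemiring R]

lemma vecMulVec_mul_mul_vecMulVec (u : l → R) (v : m → R) (A : Matrix m n R) (w : n → R)
    (x : o → R) : vecMulVec u v * A * vecMulVec w x = (v ⬝ᵥ A *ᵥ w) • vecMulVec u x := by
  rw [vecMulVec_mul, vecMulVec_mul_vecMulVec, vecMulVec_smul, dotProduct_mulVec]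

lemma trace_mul_vecMulVec (A : Matrix n n R) (v w : n → R) :
    trace (A * vecMulVec v w) = w ⬝ᵥ A *ᵥ v := by
  rw [mul_vecMulVec, trace_vecMulVec, dotProduct_comm]

lemma trace_vecMulVec_mul (A : Matrix n n R) (v w : n → R) :
    trace (vecMulVec v w * A) = w ⬝ᵥ A *ᵥ v := by
  rw [vecMulVec_mul, trace_vecMulVec, dotProduct_comm, dotProduct_mulVec]

end vecMulVec

variable {m n : Type*} [Fintype n]

lemma trace_one_sub_vecMulVec_mul_mul_one_sub_vecMulVec {R : Type*} [CommRing R] [StarRing R]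
    [DecidableEq n] (A : Matrix n n R) (φ : n → R) :
    trace ((1 - vecMulVec φ (star φ)) * A * (1 - vecMulVec φ (star φ))) =
      trace A - (2 - star φ ⬝ᵥ φ) * (star φ ⬝ᵥ A *ᵥ φ) := by
  simp only [Matrix.sub_mul, Matrix.mul_sub, Matrix.one_mul, Matrix.mul_one, trace_sub,
    vecMulVec_mul_mul_vecMulVec, trace_smul, trace_mul_vecMulVec, trace_vecMulVec_mul,
    trace_vecMulVec, smul_eq_mul]
  rw [dotProduct_comm φ]
  ring

lemma IsHermitian.eq_smul_vecMulVec_of_mul_vecMulVec_eq {R : Type*} [CommRing R] [StarRing R]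
    {V : Matrix n n R} (hV : V.IsHermitian) {φ : n → R} (h : V * vecMulVec φ (star φ) = V) :
    V = (star φ ⬝ᵥ V *ᵥ φ) • vecMulVec φ (star φ) := by
  have hleft : vecMulVec φ (star φ) * V = V := by
    simpa [conjTranspose_mul, conjTranspose_vecMulVec, hV.eq] using congrArg (·ᴴ) h
  rw [← vecMulVec_mul_mul_vecMulVec, hleft, h]

namespace PosSemidef

variable {𝕜 : Type*} [RCLike 𝕜]

open scoped MatrixOrder in
lemma conjTranspose_mul_mul_eq_zero_iff {V : Matrix n n 𝕜} (hV : V.PosSemidef)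
    (A : Matrix n m 𝕜) : Aᴴ * V * A = 0 ↔ V * A = 0 := by
  classical
  obtain ⟨B, rfl⟩ := CStarAlgebra.nonneg_iff_eq_star_mul_self.mp hV.nonneg
  rw [star_eq_conjTranspose, conjTranspose_mul_self_mul_eq_zero, ← Matrix.mul_assoc,
    Matrix.mul_assoc _ B, ← conjTranspose_mul, conjTranspose_mul_self_eq_zero]

theorem eq_trace_smul_vecMulVec_of_re_trace_le [DecidableEq n] {V : Matrix n n 𝕜}
    (hV : V.PosSemidef) {φ : n → 𝕜} (hφ : RCLike.re (star φ ⬝ᵥ φ) ≤ 1)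
    (h : RCLike.re V.trace ≤ RCLike.re (star φ ⬝ᵥ V *ᵥ φ)) :
    V = V.trace • vecMulVec φ (star φ) := by
  obtain ⟨t, -, ht⟩ := RCLike.nonneg_iff_exists_ofReal.1 hV.trace_nonneg
  obtain ⟨s, hs_nonneg, hs⟩ :=
    RCLike.nonneg_iff_exists_ofReal.1 (hV.dotProduct_mulVec_nonneg φ)
  obtain ⟨N, -, hN⟩ := RCLike.nonneg_iff_exists_ofReal.1 (dotProduct_star_self_nonneg φ)
  rw [← ht, ← hs, RCLike.ofReal_re, RCLike.ofReal_re] at h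
  rw [← hN, RCLike.ofReal_re] at hφ
  set P := vecMulVec φ (star φ) with hP
  have hPH : (1 - P)ᴴ = 1 - P := by
    rw [conjTranspose_sub, conjTranspose_one, hP, conjTranspose_vecMulVec, star_star]
  have hW := hV.conjTranspose_mul_mul_same (1 - P)
  rw [hPH] at hW
  have htrW : ((1 - P) * V * (1 - P)).trace = ((t - (2 - N) * s : ℝ) : 𝕜) := by
    rw [hP, trace_one_sub_vecMulVec_mul_mul_one_sub_vecMulVec, ← hN, ← ht, ← hs]
    push_cast
    ring
  have htrW_nonneg : 0 ≤ t - (2 - N) * s := by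
    have h_nonneg := hW.trace_nonneg
    rwa [htrW, RCLike.ofReal_nonneg] at h_nonneg
  have htrW_zero : t - (2 - N) * s = 0 := by nlinarith
  have hts : t = s := by nlinarith
  have hVP : V * P = V := by
    have hW_zero : (1 - P)ᴴ * V * (1 - P) = 0 := by
      rw [hPH, ← hW.trace_eq_zero_iff, htrW, htrW_zero, RCLike.ofReal_zero]
    rwa [hV.conjTranspose_mul_mul_eq_zero_iff, Matrix.mul_sub, Matrix.mul_one, sub_eq_zero,
      eq_comm] at hW_zero
  rw [← ht, hts, hs]
  exact hV.isHermitian.eq_smul_vecMulVec_of_mul_vecMulVec_eq hVP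

end PosSemidef

end Matrix

/-- **Tightness of the SROCR relaxation at `ω = 1`.** Let `V ⪰ 0` be `M×M` and `φ ∈ ℂᴹ` with
`‖φ‖₂ ≤ 1`. If `φᴴ V φ ≥ Tr(V)`, then `V = Tr(V) · φ φᴴ`; in particular `rank(V) ≤ 1`. -/
theorem srocr_tight {M : ℕ} {V : Matrix (Fin M) (Fin M) ℂ} (hV : V.PosSemidef)
    (φ : Fin M → ℂ) (hφ : ∑ i, ‖φ i‖ ^ 2 ≤ 1)
    (h : V.trace.re ≤ (star φ ⬝ᵥ V.mulVec φ).re) :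
    V = V.trace • Matrix.vecMulVec φ (star φ) ∧ V.rank ≤ 1 := by
  have hφ' : RCLike.re (star φ ⬝ᵥ φ) ≤ 1 := by
    simpa [dotProduct, Complex.conj_mul', ← Complex.ofReal_pow] using hφ
  have hV_eq := hV.eq_trace_smul_vecMulVec_of_re_trace_le hφ' h
  refine ⟨hV_eq, ?_⟩
  rw [hV_eq, ← smul_vecMulVec]
  exact rank_vecMulVec_le _ _
end

section
/- (Equivalence of the ball-constrained quadratic constraint and the LMI, eqs. (13)–(14)) Let W̃ be an n×n complex Hermitian matrix, x̂ ∈ ℂ^n, τ ∈ ℝ, and ξ > 0. Then the semi-infinite condition [for all Δx ∈ ℂ^n with ‖Δx‖₂² ≤ ξ²: (x̂ + Δx)^H W̃ (x̂ + Δx) ≤ τ] holds if and only if there exists a real ϖ ≥ 0 such that the (n+1)×(n+1) Hermitian block matrix [[ϖ·I_n − W̃, −W̃ x̂],[−x̂^H W̃, −ϖ·ξ² − x̂^H W̃ x̂ + τ]] is positive semidefinite. -/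
/-!
View `W̃` as a symmetric operator `T` on `ℂⁿ` with its real inner product, let
`f z = ⟪T (x + z), x + z⟫` and let `y` maximise `f` on the ball `‖z‖ ≤ ξ`. The variational
inequality `⟪T (x + y), z - y⟫ ≤ 0` over the ball forces `T (x + y) = ϖ • y` with `ϖ ≥ 0`, and
`ϖ = 0` unless `‖y‖ = ξ`. The Lagrangian `f z - ϖ ‖z‖²` is then stationary at `y`, so it differs
from its value at `y` by the quadratic form of `T - ϖ` at `z - y`. Comparing `y` with the points
of the sphere `‖z‖ = ‖y‖` (reflections of `y`), or with a neighbourhood of `y` when `y` is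
interior, shows `⟪T v, v⟫ ≤ ϖ ‖v‖²`, and hence, if `f ≤ τ` on the ball,
`f z ≤ τ + ϖ (‖z‖² - ξ²)` for every `z`. The quadratic form of the LMI at `(u, t)` is `‖t‖²`
times the slack of this inequality at `z = u / t`, and `ϖ ‖u‖² - ⟪T u, u⟫` at `t = 0`.
-/

open Matrix ComplexOrder Filter Topology Metric
open scoped RealInnerProductSpace

section TrustRegion

variable {E : Type*} [NormedAddCommGroup E] [InnerProductSpace ℝ E] {T : E →ₗ[ℝ] E}

theorem LinearMap.IsSymmetric.inner_apply_add_self (hT : T.IsSymmetric) (a b : E) :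
    ⟪T (a + b), a + b⟫ = ⟪T a, a⟫ + 2 * ⟪T a, b⟫ + ⟪T b, b⟫ := by
  rw [map_add, inner_add_left, inner_add_right, inner_add_right, hT b a, real_inner_comm (T a)]
  ring

theorem LinearMap.IsSymmetric.inner_apply_sub_nonpos_of_isMaxOn (hT : T.IsSymmetric) {s : Set E}
    (hs : Convex ℝ s) {x y z : E} (hy : y ∈ s) (hz : z ∈ s)
    (hmax : IsMaxOn (fun z => ⟪T (x + z), x + z⟫) s y) : ⟪T (x + y), z - y⟫ ≤ 0 := by
  set a := ⟪T (x + y), z - y⟫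
  set b := ⟪T (z - y), z - y⟫
  have hsegment : ∀ t ∈ Set.Ioo (0 : ℝ) 1, 2 * a + t * b ≤ 0 := by
    rintro t ⟨ht₀, ht₁⟩
    have hle : ⟪T (x + (y + t • (z - y))), x + (y + t • (z - y))⟫ ≤ ⟪T (x + y), x + y⟫ :=
      hmax (hs.add_smul_sub_mem hy hz ⟨ht₀.le, ht₁.le⟩)
    rw [← add_assoc, hT.inner_apply_add_self, map_smul, real_inner_smul_left,
      real_inner_smul_right, real_inner_smul_right] at hle
    nlinarith
  have hlim : Tendsto (fun t : ℝ => 2 * a + t * b) (𝓝[>] 0) (𝓝 (2 * a + 0 * b)) :=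
    ((continuous_const.add (continuous_id.mul continuous_const)).tendsto 0).mono_left
      nhdsWithin_le_nhds
  have := le_of_tendsto hlim (eventually_of_mem (Ioo_mem_nhdsGT one_pos) hsegment)
  linarith

theorem exists_nonneg_smul_of_forall_inner_sub_nonpos {ξ : ℝ} (hξ : 0 < ξ) {g y : E}
    (hy : ‖y‖ ≤ ξ) (h : ∀ z, ‖z‖ ≤ ξ → ⟪g, z - y⟫ ≤ 0) :
    ∃ ϖ : ℝ, 0 ≤ ϖ ∧ g = ϖ • y ∧ (ϖ = 0 ∨ ‖y‖ = ξ) := by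
  rcases eq_or_ne g 0 with rfl | hg
  · exact ⟨0, le_rfl, (zero_smul ℝ y).symm, Or.inl rfl⟩
  have hg' : 0 < ‖g‖ := norm_pos_iff.mpr hg
  -- Testing against `(ξ / ‖g‖) • g` gives `ξ ‖g‖ ≤ ⟪g, y⟫ ≤ ‖g‖ ‖y‖ ≤ ξ ‖g‖`,
  -- so Cauchy–Schwarz is an equality.
  have hz : ‖(ξ / ‖g‖) • g‖ = ξ := by
    rw [norm_smul, Real.norm_eq_abs, abs_of_pos (div_pos hξ hg'), div_mul_cancel₀ _ hg'.ne']
  have hgz : ⟪g, (ξ / ‖g‖) • g⟫ = ξ * ‖g‖ := by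
    rw [real_inner_smul_right, real_inner_self_eq_norm_sq]
    field_simp
  have hlower := h _ hz.le
  rw [inner_sub_right, hgz] at hlower
  have hupper := mul_le_mul_of_nonneg_left hy hg'.le
  have hcs := real_inner_le_norm g y
  have hynorm : ‖y‖ = ξ := by nlinarith
  have hcs_eq : ⟪g, y⟫ = ‖g‖ * ‖y‖ := by nlinarith
  refine ⟨‖g‖ / ξ, by positivity, ?_, Or.inr hynorm⟩
  rw [inner_eq_norm_mul_iff_real, hynorm] at hcs_eq
  rw [div_eq_inv_mul, mul_smul, ← hcs_eq, inv_smul_smul₀ hξ.ne']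

theorem LinearMap.IsSymmetric.inner_apply_sub_norm_sq_eq_of_apply_eq_smul (hT : T.IsSymmetric)
    {x y : E} {ϖ : ℝ} (hg : T (x + y) = ϖ • y) (z : E) :
    ⟪T (x + z), x + z⟫ - ϖ * ‖z‖ ^ 2
      = ⟪T (x + y), x + y⟫ - ϖ * ‖y‖ ^ 2 + (⟪T (z - y), z - y⟫ - ϖ * ‖z - y‖ ^ 2) := by
  obtain ⟨w, rfl⟩ : ∃ w, z = y + w := ⟨z - y, by abel⟩
  rw [add_sub_cancel_left, ← add_assoc, hT.inner_apply_add_self, norm_add_sq_real]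
  simp only [hg, real_inner_smul_left]
  ring

theorem LinearMap.inner_apply_self_nonpos_of_sphere (S : E →ₗ[ℝ] E) {y : E} (hy : y ≠ 0)
    (h : ∀ w, ‖y + w‖ = ‖y‖ → ⟪S w, w⟫ ≤ 0) (v : E) : ⟪S v, v⟫ ≤ 0 := by
  have htransversal : ∀ v, ⟪y, v⟫ ≠ 0 → ⟪S v, v⟫ ≤ 0 := by
    intro v hv
    have hv0 : ‖v‖ ≠ 0 := by
      rintro h0
      exact hv (by rw [norm_eq_zero.1 h0, inner_zero_right])
    -- `y + c • v` is the reflection of `y` in the hyperplane orthogonal to `v`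
    set c := -2 * ⟪y, v⟫ / ‖v‖ ^ 2 with hc_def
    have hc : c ≠ 0 := div_ne_zero (mul_ne_zero (by norm_num) hv) (pow_ne_zero 2 hv0)
    have hsphere : ‖y + c • v‖ = ‖y‖ := by
      rw [← sq_eq_sq₀ (norm_nonneg _) (norm_nonneg _), norm_add_sq_real, real_inner_smul_right,
        norm_smul, mul_pow, Real.norm_eq_abs, sq_abs, hc_def]
      field_simp
      ring
    have hcv := h _ hsphere
    rw [map_smul, real_inner_smul_left, real_inner_smul_right, ← mul_assoc] at hcv
    exact nonpos_of_mul_nonpos_right hcv (mul_self_pos.2 hc)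
  by_cases hv : ⟪y, v⟫ = 0
  · have hexpand : ∀ ε : ℝ, ⟪S (v + ε • y), v + ε • y⟫
        = ⟪S v, v⟫ + ε * (⟪S v, y⟫ + ⟪S y, v⟫) + ε ^ 2 * ⟪S y, y⟫ := by
      intro ε
      simp only [map_add, map_smul, inner_add_left, inner_add_right, real_inner_smul_left,
        real_inner_smul_right]
      ring
    have hpos : ∀ ε ∈ Set.Ioi (0 : ℝ), ⟪S (v + ε • y), v + ε • y⟫ ≤ 0 := by
      intro ε hε
      refine htransversal _ ?_
      rw [inner_add_right, hv, real_inner_smul_right, real_inner_self_eq_norm_sq, zero_add]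
      exact mul_ne_zero (ne_of_gt hε) (pow_ne_zero 2 (norm_ne_zero_iff.2 hy))
    have hlim : Tendsto (fun ε : ℝ => ⟪S (v + ε • y), v + ε • y⟫) (𝓝[>] 0) (𝓝 ⟪S v, v⟫) := by
      have hcont : Continuous fun ε : ℝ =>
          ⟪S v, v⟫ + ε * (⟪S v, y⟫ + ⟪S y, v⟫) + ε ^ 2 * ⟪S y, y⟫ := by
        fun_prop
      rw [funext hexpand]
      simpa using (hcont.tendsto 0).mono_left nhdsWithin_le_nhds
    exact le_of_tendsto hlim (eventually_nhdsWithin_of_forall hpos)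
  · exact htransversal v hv

theorem LinearMap.inner_apply_self_nonpos_of_eventually (S : E →ₗ[ℝ] E)
    (h : ∀ᶠ w in 𝓝 0, ⟪S w, w⟫ ≤ 0) (v : E) : ⟪S v, v⟫ ≤ 0 := by
  have hlim : Tendsto (fun c : ℝ => c • v) (𝓝[>] 0) (𝓝 0) := by
    have hcont : Continuous fun c : ℝ => c • v := by fun_prop
    simpa using (hcont.tendsto 0).mono_left nhdsWithin_le_nhds
  obtain ⟨c, hc, hcv⟩ := (eventually_mem_nhdsWithin.and (hlim.eventually h)).exists
  rw [map_smul, real_inner_smul_left, real_inner_smul_right, ← mul_assoc] at hcv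
  exact nonpos_of_mul_nonpos_right hcv (mul_self_pos.2 (ne_of_gt hc))

theorem LinearMap.IsSymmetric.exists_multiplier_of_isMaxOn (hT : T.IsSymmetric) {x y : E} {ξ : ℝ}
    (hξ : 0 < ξ) (hy : ‖y‖ ≤ ξ)
    (hmax : IsMaxOn (fun z => ⟪T (x + z), x + z⟫) (closedBall 0 ξ) y) :
    ∃ ϖ : ℝ, 0 ≤ ϖ ∧ T (x + y) = ϖ • y ∧ (ϖ = 0 ∨ ‖y‖ = ξ) ∧
      ∀ v, ⟪T v, v⟫ ≤ ϖ * ‖v‖ ^ 2 := by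
  obtain ⟨ϖ, hϖ, hg, hslack⟩ := exists_nonneg_smul_of_forall_inner_sub_nonpos hξ hy fun z hz =>
    hT.inner_apply_sub_nonpos_of_isMaxOn (convex_closedBall 0 ξ) (mem_closedBall_zero_iff.2 hy)
      (mem_closedBall_zero_iff.2 hz) hmax
  refine ⟨ϖ, hϖ, hg, hslack, fun v => ?_⟩
  set S := T - ϖ • LinearMap.id
  have hS : ∀ w, ⟪S w, w⟫ = ⟪T w, w⟫ - ϖ * ‖w‖ ^ 2 := fun w => by
    simp [S, inner_sub_left, real_inner_smul_left]
  have hlocal : ∀ w, ‖y + w‖ ≤ ξ → ⟪S w, w⟫ ≤ ϖ * (‖y‖ ^ 2 - ‖y + w‖ ^ 2) := by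
    intro w hw
    have hL := hT.inner_apply_sub_norm_sq_eq_of_apply_eq_smul hg (y + w)
    have hle : ⟪T (x + (y + w)), x + (y + w)⟫ ≤ ⟪T (x + y), x + y⟫ :=
      hmax (mem_closedBall_zero_iff.2 hw)
    rw [add_sub_cancel_left] at hL
    rw [hS]
    linarith
  suffices ⟪S v, v⟫ ≤ 0 by rw [hS] at this; linarith
  rcases hy.eq_or_lt with hsphere | hinterior
  · refine S.inner_apply_self_nonpos_of_sphere (y := y) ?_ (fun w hw => ?_) v
    · rw [← norm_ne_zero_iff, hsphere]
      exact hξ.ne'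
    · simpa [hw] using hlocal w (by rw [hw, hsphere])
  · have hϖ0 : ϖ = 0 := hslack.resolve_right hinterior.ne
    refine S.inner_apply_self_nonpos_of_eventually ?_ v
    have hnear : ∀ᶠ w in 𝓝 (0 : E), ‖y + w‖ < ξ := by
      have hcont : Continuous fun w : E => ‖y + w‖ := by fun_prop
      exact hcont.continuousAt.eventually_lt continuousAt_const (by simpa using hinterior)
    filter_upwards [hnear] with w hw
    simpa [hϖ0] using hlocal w hw.le

theorem LinearMap.IsSymmetric.exists_multiplier_of_forall_norm_le [FiniteDimensional ℝ E]
    (hT : T.IsSymmetric) (x : E) {ξ τ : ℝ} (hξ : 0 < ξ)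
    (h : ∀ z, ‖z‖ ≤ ξ → ⟪T (x + z), x + z⟫ ≤ τ) :
    ∃ ϖ : ℝ, 0 ≤ ϖ ∧ (∀ z, ⟪T (x + z), x + z⟫ ≤ τ + ϖ * (‖z‖ ^ 2 - ξ ^ 2)) ∧
      ∀ v, ⟪T v, v⟫ ≤ ϖ * ‖v‖ ^ 2 := by
  have hTcont := T.continuous_of_finiteDimensional
  obtain ⟨y, hy, hmax⟩ := (isCompact_closedBall (0 : E) ξ).exists_isMaxOn
    (nonempty_closedBall.2 hξ.le) (by fun_prop : Continuous fun z => ⟪T (x + z), x + z⟫).continuousOn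
  rw [mem_closedBall_zero_iff] at hy
  obtain ⟨ϖ, hϖ, hg, hslack, hneg⟩ := hT.exists_multiplier_of_isMaxOn hξ hy hmax
  refine ⟨ϖ, hϖ, fun z => ?_, hneg⟩
  have hL := hT.inner_apply_sub_norm_sq_eq_of_apply_eq_smul hg z
  have hslack' : ϖ * ‖y‖ ^ 2 = ϖ * ξ ^ 2 := by rcases hslack with h | h <;> simp [h]
  linarith [hneg (z - y), h y hy]

end TrustRegion

section EuclideanSpace

variable {ι : Type*} [Fintype ι]

-- Not `rfl`: the real inner product of `EuclideanSpace ℂ ι` is the `PiLp` one, a sum of real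
-- parts, rather than `InnerProductSpace.rclikeToReal`.
theorem EuclideanSpace.real_inner_eq_re_inner (a b : EuclideanSpace ℂ ι) :
    ⟪a, b⟫ = (inner ℂ a b).re := by
  simp [PiLp.inner_apply, Complex.re_sum, Complex.inner]

theorem EuclideanSpace.star_dotProduct_self (a : EuclideanSpace ℂ ι) :
    star a.ofLp ⬝ᵥ a.ofLp = ((‖a‖ ^ 2 : ℝ) : ℂ) := by
  calc star a.ofLp ⬝ᵥ a.ofLp = inner ℂ a a := by
        rw [EuclideanSpace.inner_eq_star_dotProduct, dotProduct_comm]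
    _ = _ := by exact_mod_cast inner_self_eq_norm_sq_to_K a

theorem EuclideanSpace.real_inner_apply_smul_smul
    (T : EuclideanSpace ℂ ι →ₗ[ℂ] EuclideanSpace ℂ ι) (c : ℂ) (a : EuclideanSpace ℂ ι) :
    ⟪T (c • a), c • a⟫ = ‖c‖ ^ 2 * ⟪T a, a⟫ := by
  rw [EuclideanSpace.real_inner_eq_re_inner, EuclideanSpace.real_inner_eq_re_inner, map_smul,
    inner_smul_left, inner_smul_right, ← mul_assoc, Complex.conj_mul', ← Complex.ofReal_pow,
    Complex.re_ofReal_mul]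

variable [DecidableEq ι] {W : Matrix ι ι ℂ}

theorem Matrix.IsHermitian.isSymmetric_restrictScalars_toEuclideanLin (hW : W.IsHermitian) :
    ((toEuclideanLin W).restrictScalars ℝ).IsSymmetric := fun a b => by
  simp only [LinearMap.coe_restrictScalars, EuclideanSpace.real_inner_eq_re_inner]
  rw [isSymmetric_toEuclideanLin_iff.2 hW a b]

theorem Matrix.IsHermitian.star_dotProduct_mulVec_eq_real_inner (hW : W.IsHermitian)
    (a : EuclideanSpace ℂ ι) :
    star a.ofLp ⬝ᵥ W *ᵥ a.ofLp = (⟪toEuclideanLin W a, a⟫ : ℂ) := by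
  have hT := isSymmetric_toEuclideanLin_iff.2 hW
  calc star a.ofLp ⬝ᵥ W *ᵥ a.ofLp = inner ℂ a (toEuclideanLin W a) := by
        rw [EuclideanSpace.inner_eq_star_dotProduct, dotProduct_comm]
        rfl
    _ = inner ℂ (toEuclideanLin W a) a := (hT a a).symm
    _ = _ := by
        rw [EuclideanSpace.real_inner_eq_re_inner]
        exact (hT.coe_re_inner_apply_self a).symm

end EuclideanSpace

section LMI

variable {ι : Type*} [Fintype ι] [DecidableEq ι] {W : Matrix ι ι ℂ}

noncomputable def ballLMI (W : Matrix ι ι ℂ) (x : ι → ℂ) (τ ξ ϖ : ℝ) :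
    Matrix (ι ⊕ Fin 1) (ι ⊕ Fin 1) ℂ :=
  fromBlocks (ϖ • (1 : Matrix ι ι ℂ) - W) (-(replicateCol (Fin 1) (W *ᵥ x)))
    (-(replicateRow (Fin 1) (star x ᵥ* W)))
    (of fun _ _ => ((-(ϖ * ξ ^ 2) - (star x ⬝ᵥ W *ᵥ x).re + τ : ℝ) : ℂ))

theorem isHermitian_ballLMI (hW : W.IsHermitian) (x : ι → ℂ) (τ ξ ϖ : ℝ) :
    (ballLMI W x τ ξ ϖ).IsHermitian := by
  refine IsHermitian.fromBlocks ((isHermitian_one.smul (IsSelfAdjoint.all ϖ)).sub hW) ?_ ?_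
  · rw [conjTranspose_neg, conjTranspose_replicateCol, star_mulVec, hW.eq]
  · ext; simp [Complex.conj_ofReal]

theorem star_dotProduct_ballLMI_mulVec (hW : W.IsHermitian) (x : ι → ℂ) (τ ξ ϖ : ℝ)
    (u : ι → ℂ) (t : ℂ) :
    star (u ⊕ᵥ fun _ : Fin 1 => t) ⬝ᵥ ballLMI W x τ ξ ϖ *ᵥ (u ⊕ᵥ fun _ : Fin 1 => t)
      = ϖ * (star u ⬝ᵥ u) + star t * t * (τ - ϖ * ξ ^ 2)
        - star (t • x + u) ⬝ᵥ W *ᵥ (t • x + u) := by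
  have hstar : star (u ⊕ᵥ fun _ : Fin 1 => t) = star u ⊕ᵥ fun _ : Fin 1 => star t := by
    ext (i | i) <;> rfl
  have hre : (((star x ⬝ᵥ W *ᵥ x).re : ℝ) : ℂ) = star x ⬝ᵥ W *ᵥ x := by
    refine Complex.conj_eq_iff_re.1 ?_
    rw [← Complex.star_def, ← star_dotProduct, star_mulVec, ← dotProduct_mulVec, hW.eq]
  have hfin : ∀ (a : ℂ) (w : Fin 1 → ℂ), (fun _ : Fin 1 => a) ⬝ᵥ w = a * w 0 := by
    simp [dotProduct]
  have h₁₁ : star u ⬝ᵥ (ϖ • (1 : Matrix ι ι ℂ) - W) *ᵥ u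
      = ϖ * (star u ⬝ᵥ u) - star u ⬝ᵥ W *ᵥ u := by
    rw [sub_mulVec, smul_mulVec, one_mulVec, dotProduct_sub, dotProduct_smul, Complex.real_smul]
  have h₁₂ : (-replicateCol (Fin 1) (W *ᵥ x)) *ᵥ (fun _ => t) = -(t • W *ᵥ x) := by
    ext i
    simp [mulVec, dotProduct, mul_comm]
  have h₂₁ : (-replicateRow (Fin 1) (star x ᵥ* W)) *ᵥ u = fun _ => -(star x ⬝ᵥ W *ᵥ u) := by
    rw [neg_mulVec, replicateRow_mulVec_eq_const, dotProduct_mulVec]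
    rfl
  have h₂₂ : ∀ d : ℂ, ((of fun _ _ => d : Matrix (Fin 1) (Fin 1) ℂ) *ᵥ fun _ => t) 0 = d * t := by
    simp [mulVec, dotProduct]
  rw [hstar, ballLMI, fromBlocks_mulVec, sumElim_dotProduct_sumElim, Sum.elim_comp_inl,
    Sum.elim_comp_inr, dotProduct_add, dotProduct_add, h₁₁, h₁₂, h₂₁, hfin, hfin, h₂₂]
  simp only [star_add, star_smul, mulVec_add, mulVec_smul, add_dotProduct, dotProduct_add,
    smul_dotProduct, dotProduct_neg, dotProduct_smul, smul_eq_mul]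
  push_cast
  rw [hre]
  ring

theorem posSemidef_ballLMI_iff (hW : W.IsHermitian) (x : ι → ℂ) (τ ξ ϖ : ℝ) :
    (ballLMI W x τ ξ ϖ).PosSemidef ↔
      (∀ z, ⟪toEuclideanLin W (WithLp.toLp 2 x + z), WithLp.toLp 2 x + z⟫
          ≤ τ + ϖ * (‖z‖ ^ 2 - ξ ^ 2)) ∧
        ∀ v, ⟪toEuclideanLin W v, v⟫ ≤ ϖ * ‖v‖ ^ 2 := by
  have hform (u : EuclideanSpace ℂ ι) (t : ℂ) :
      star (u.ofLp ⊕ᵥ fun _ : Fin 1 => t) ⬝ᵥ ballLMI W x τ ξ ϖ *ᵥ (u.ofLp ⊕ᵥ fun _ => t)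
        = ((ϖ * ‖u‖ ^ 2 + ‖t‖ ^ 2 * (τ - ϖ * ξ ^ 2)
            - ⟪toEuclideanLin W (t • WithLp.toLp 2 x + u), t • WithLp.toLp 2 x + u⟫ : ℝ) : ℂ) := by
    have hq := hW.star_dotProduct_mulVec_eq_real_inner (t • WithLp.toLp 2 x + u)
    simp only [WithLp.ofLp_add, WithLp.ofLp_smul] at hq
    rw [star_dotProduct_ballLMI_mulVec hW, EuclideanSpace.star_dotProduct_self, hq,
      Complex.star_def, Complex.conj_mul']
    push_cast
    ring
  rw [posSemidef_iff_dotProduct_mulVec, and_iff_right (isHermitian_ballLMI hW x τ ξ ϖ)]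
  constructor
  · intro h
    constructor
    · intro z
      have hz := h (z.ofLp ⊕ᵥ fun _ => 1)
      rw [hform, Complex.zero_le_real, one_smul, norm_one] at hz
      linarith
    · intro v
      have hv := h (v.ofLp ⊕ᵥ fun _ => 0)
      rw [hform, Complex.zero_le_real, zero_smul, zero_add, norm_zero] at hv
      linarith
  · rintro ⟨hball, hneg⟩ w
    obtain ⟨u, t, rfl⟩ : ∃ (u : EuclideanSpace ℂ ι) (t : ℂ), w = u.ofLp ⊕ᵥ fun _ => t := by
      refine ⟨WithLp.toLp 2 (w ∘ Sum.inl), w (Sum.inr 0), ?_⟩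
      ext (i | i)
      · rfl
      · rw [Fin.eq_zero i]
        rfl
    rw [hform, Complex.zero_le_real]
    rcases eq_or_ne t 0 with rfl | ht
    · rw [zero_smul, zero_add, norm_zero]
      linarith [hneg u]
    · obtain ⟨z, rfl⟩ : ∃ z, u = t • z := ⟨t⁻¹ • u, by rw [smul_inv_smul₀ ht]⟩
      rw [← smul_add, EuclideanSpace.real_inner_apply_smul_smul, norm_smul]
      nlinarith [hball z, sq_nonneg ‖t‖]

end LMI

/-- **Equivalence of the ball-constrained quadratic constraint and the LMI (eqs. (13)–(14)).**
For Hermitian `W̃`, `x̂ ∈ ℂⁿ`, `τ ∈ ℝ` and `ξ > 0`: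
`(x̂+Δx)ᴴ W̃ (x̂+Δx) ≤ τ` for all `Δx` with `‖Δx‖₂² ≤ ξ²` iff there is `ϖ ≥ 0` such that
`[[ϖ·I − W̃, −W̃ x̂],[−x̂ᴴ W̃, −ϖ ξ² − x̂ᴴ W̃ x̂ + τ]] ⪰ 0`. -/
theorem ball_quadratic_iff_LMI {n : ℕ} (Wt : Matrix (Fin n) (Fin n) ℂ)
    (hWt : Wt.IsHermitian) (xh : Fin n → ℂ) (τ ξ : ℝ) (hξ : 0 < ξ) :
    (∀ Δx : Fin n → ℂ, (∑ i, ‖Δx i‖ ^ 2) ≤ ξ ^ 2 →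
        (star (xh + Δx) ⬝ᵥ Wt.mulVec (xh + Δx)).re ≤ τ) ↔
      ∃ ϖ : ℝ, 0 ≤ ϖ ∧
        (Matrix.fromBlocks
          (ϖ • (1 : Matrix (Fin n) (Fin n) ℂ) - Wt)
          (-(Matrix.replicateCol (Fin 1) (Wt.mulVec xh)))
          (-(Matrix.replicateRow (Fin 1) (Matrix.vecMul (star xh) Wt)))
          (Matrix.of fun _ _ =>
            ((-(ϖ * ξ ^ 2) - (star xh ⬝ᵥ Wt.mulVec xh).re + τ : ℝ) : ℂ))).PosSemidef := by
  have hnorm (Δx : Fin n → ℂ) : ∑ i, ‖Δx i‖ ^ 2 = ‖WithLp.toLp 2 Δx‖ ^ 2 :=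
    (EuclideanSpace.norm_sq_eq _).symm
  have hquad (Δx : Fin n → ℂ) : (star (xh + Δx) ⬝ᵥ Wt *ᵥ (xh + Δx)).re
      = ⟪toEuclideanLin Wt (WithLp.toLp 2 xh + WithLp.toLp 2 Δx),
          WithLp.toLp 2 xh + WithLp.toLp 2 Δx⟫ := by
    rw [← Complex.ofReal_re ⟪_, _⟫, ← hWt.star_dotProduct_mulVec_eq_real_inner]
    rfl
  change _ ↔ ∃ ϖ : ℝ, 0 ≤ ϖ ∧ (ballLMI Wt xh τ ξ ϖ).PosSemidef
  simp_rw [posSemidef_ballLMI_iff hWt]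
  constructor
  · intro h
    refine hWt.isSymmetric_restrictScalars_toEuclideanLin.exists_multiplier_of_forall_norm_le
      (WithLp.toLp 2 xh) hξ fun z hz => ?_
    have hz' := h z.ofLp (by rw [hnorm]; exact pow_le_pow_left₀ (norm_nonneg _) hz 2)
    rwa [hquad] at hz'
  · rintro ⟨ϖ, hϖ, hball, -⟩ Δx hΔx
    rw [hnorm] at hΔx
    rw [hquad]
    linarith [hball (WithLp.toLp 2 Δx), mul_nonpos_of_nonneg_of_nonpos hϖ (sub_nonpos.2 hΔx)]
end
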